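/- (MNL single-level decomposition.) If an optimal SML assortment S* contains only products from a single level, then for every nonempty Z ⊆ S*, R* = R(S*\Z)·(1 − λ(Z,S*)) + α(Z)·λ(Z,S*); consequently α(Z) ≥ R* by optimality (since R(S*\Z) ≤ R*). -/

import Mathlib

open Finset

/-- Total utility of an assortment. -/
noncomputable def Utot {ι : Type*} (u : ι → ℝ) (S : Finset ι) : ℝ := ∑ x ∈ S, u x

/-- Utility-weighted average revenue α(S). -/
noncomputable def alphaRev {ι : Type*} (u r : ι → ℝ) (S : Finset ι) : ℝ :=
  (∑ x ∈ S, u x * r x) / Utot u S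

/-- MNL expected revenue (single level): R(S) = (∑_{x∈S} r(x)u(x))/(U(S)+u₀). -/
noncomputable def RevMNL {ι : Type*} (u r : ι → ℝ) (u0 : ℝ) (S : Finset ι) : ℝ :=
  (∑ x ∈ S, r x * u x) / (Utot u S + u0)

/-!
Removing `Z` from `S` splits both the numerator and the denominator of `R(S)` additively, which
exhibits `R(S)` as the mixture `(1 - λ) R(S ∖ Z) + λ α(Z)` with weight `λ = U(Z) / (U(S) + u₀)`.
If `S` is optimal then `R(S ∖ Z) ≤ R(S)`, and since `0 < λ ≤ 1` the mixture can only reach `R(S)`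
if `α(Z) ≥ R(S)`.
-/

section Utot

variable {ι : Type*} {u : ι → ℝ} {S : Finset ι}

lemma Utot_nonneg (hu : ∀ x ∈ S, 0 ≤ u x) : 0 ≤ Utot u S := sum_nonneg hu

lemma Utot_pos (hu : ∀ x ∈ S, 0 < u x) (hS : S.Nonempty) : 0 < Utot u S := sum_pos hu hS

lemma Utot_sdiff [DecidableEq ι] {Z : Finset ι} (hZS : Z ⊆ S) :
    Utot u (S \ Z) = Utot u S - Utot u Z :=
  sum_sdiff_eq_sub hZS

end Utot

lemma RevMNL_eq_sdiff_mix {ι : Type*} [DecidableEq ι] (u r : ι → ℝ) (u0 : ℝ) {S Z : Finset ι}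
    (hZS : Z ⊆ S) (hS : Utot u S + u0 ≠ 0) (hZ : Utot u Z ≠ 0)
    (hSZ : Utot u (S \ Z) + u0 ≠ 0) :
    RevMNL u r u0 S =
      RevMNL u r u0 (S \ Z) * (1 - Utot u Z / (Utot u S + u0)) +
        alphaRev u r Z * (Utot u Z / (Utot u S + u0)) := by
  have hnum : ∑ x ∈ S, r x * u x = ∑ x ∈ S \ Z, r x * u x + ∑ x ∈ Z, u x * r x := by
    simp only [mul_comm (u _)]
    exact (sum_sdiff hZS).symm
  rw [Utot_sdiff hZS] at hSZ
  unfold RevMNL alphaRev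
  rw [hnum, Utot_sdiff hZS]
  field_simp
  ring

lemma le_of_eq_mix_of_le {x y a t : ℝ} (hx : x = y * (1 - t) + a * t) (hy : y ≤ x)
    (ht₀ : 0 < t) (ht₁ : t ≤ 1) : x ≤ a := by
  have : x * (1 - t) + x * t ≤ x * (1 - t) + a * t := by
    linarith [mul_le_mul_of_nonneg_right hy (sub_nonneg.mpr ht₁)]
  exact le_of_mul_le_mul_right (by linarith) ht₀

theorem stmt17_general {ι : Type*} [DecidableEq ι] (u r : ι → ℝ) (u0 : ℝ)
    (X Sstar : Finset ι)
    (hu : ∀ x ∈ X, 0 < u x) (hu0 : 0 < u0)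
    (hS : Sstar ⊆ X)
    (hopt : ∀ T ⊆ X, RevMNL u r u0 T ≤ RevMNL u r u0 Sstar) :
    ∀ Z ⊆ Sstar, Z.Nonempty →
      RevMNL u r u0 Sstar =
          RevMNL u r u0 (Sstar \ Z) * (1 - Utot u Z / (Utot u Sstar + u0)) +
            alphaRev u r Z * (Utot u Z / (Utot u Sstar + u0)) ∧
        RevMNL u r u0 Sstar ≤ alphaRev u r Z := by
  intro Z hZS hZne
  have hUZ : 0 < Utot u Z := Utot_pos (fun x hx => hu x (hS (hZS hx))) hZne
  have hUSZ : 0 ≤ Utot u (Sstar \ Z) :=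
    Utot_nonneg fun x hx => (hu x (hS (mem_sdiff.mp hx).1)).le
  have hUS : Utot u Z + Utot u (Sstar \ Z) = Utot u Sstar := by rw [Utot_sdiff hZS]; ring
  have hdec := RevMNL_eq_sdiff_mix u r u0 hZS (by linarith) hUZ.ne' (by linarith)
  have hD : 0 < Utot u Sstar + u0 := by linarith
  exact ⟨hdec, le_of_eq_mix_of_le hdec (hopt _ (sdiff_subset.trans hS)) (div_pos hUZ hD)
    ((div_le_one hD).mpr (by linarith))⟩

/-- Single-level decomposition: if S* maximizes the MNL revenue over subsets of X,
then for every nonempty Z ⊆ S*, R* = R(S*∖Z)·(1 − λ(Z,S*)) + α(Z)·λ(Z,S*), and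
consequently α(Z) ≥ R*. -/
theorem stmt17 {ι : Type*} [DecidableEq ι] (u r : ι → ℝ) (u0 : ℝ)
    (X Sstar : Finset ι)
    (hu : ∀ x ∈ X, 0 < u x) (hr : ∀ x, 0 ≤ r x) (hu0 : 0 < u0)
    (hS : Sstar ⊆ X)
    (hopt : ∀ T ⊆ X, RevMNL u r u0 T ≤ RevMNL u r u0 Sstar) :
    ∀ Z ⊆ Sstar, Z.Nonempty →
      RevMNL u r u0 Sstar =
          RevMNL u r u0 (Sstar \ Z) * (1 - Utot u Z / (Utot u Sstar + u0)) +
            alphaRev u r Z * (Utot u Z / (Utot u Sstar + u0)) ∧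
        RevMNL u r u0 Sstar ≤ alphaRev u r Z :=
  stmt17_general u r u0 X Sstar hu hu0 hS hopt
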